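/- Let x, y, z ∈ ℂ be pairwise distinct, let m, k, l be positive integers, and let r be an integer with 1 ≤ r ≤ m + 1. Then Σ_{s=1}^{k+1} binom(k+l−s, k+1−s)·binom(m+s−r, m+1−r)·(−1)^{l+s}·(2k+1−s)·(2m+1−r) / ((z−y)^{l+k+1−s}·(y−x)^{m+s+1−r}) − Σ_{s=1}^{l+1} binom(l+k−s, l+1−s)·binom(m+s−r, m+1−r)·(−1)^{k+s}·(2l+1−s)·(2m+1−r) / ((y−z)^{l+k+1−s}·(z−x)^{m+s+1−r}) = Σ_{s=r−1}^{m+1} binom(m+k−s, m+1−s)·binom(s+l−r, s+1−r)·(−1)^{k+l}·(2m+1−s)·(2s+1−r) / ((y−x)^{k+m+1−s}·(z−x)^{l+s+1−r}) − Σ_{s=r−1}^{m+1} binom(m+l−s, m+1−s)·binom(s+k−r, s+1−r)·(−1)^{k+l}·(2m+1−s)·(2s+1−r) / ((z−x)^{l+m+1−s}·(y−x)^{k+s+1−r}). -/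

import Mathlib

/-!
Put `a = y - x`, `b = z - x` and `j = m + 1 - r`. Both sides are `2m + 1 - r` times an expression
that depends on `m` only through `j`: on the left the principal parts at the poles `x = y` and
`x = z`, on the right a convolution of powers of `a⁻¹` and `b⁻¹`.

At `j = 0` the right side is `(-1)^(k+l) (l a⁻ᵏ b⁻ˡ⁻¹ - k a⁻ᵏ⁻¹ b⁻ˡ)` and the identity is its
partial-fraction expansion in `x`. It is checked directly for `k = l = 1`; differentiating in `y`
turns the `(k, l)` identity into `k` times the `(k + 1, l)` identity, and exchanging `y` and `z`
exchanges `k` and `l`. Differentiating in `x` turns the identity at level `j` into `j + 1` times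
the identity at level `j + 1`.
-/

open Finset

section

variable {𝕜 : Type*} [NontriviallyNormedField 𝕜]

theorem natCast_mul_pow_sub_one {a : 𝕜} (ha : a ≠ 0) (n : ℕ) :
    (n : 𝕜) * a ^ (n - 1) = n * a ^ n / a := by
  rcases n with _ | n
  · simp
  · rw [Nat.add_sub_cancel, pow_succ, mul_div_assoc, mul_div_cancel_right₀ _ ha]

theorem HasDerivAt.const_div_pow_mul_pow {f g : 𝕜 → 𝕜} {f' g' t : 𝕜}
    (hf : HasDerivAt f f' t) (hg : HasDerivAt g g' t) (hf0 : f t ≠ 0) (hg0 : g t ≠ 0)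
    (c : 𝕜) (p q : ℕ) :
    HasDerivAt (fun t => c / (f t ^ p * g t ^ q))
      (-c * (p * f' / (f t ^ (p + 1) * g t ^ q) + q * g' / (f t ^ p * g t ^ (q + 1)))) t := by
  refine ((hasDerivAt_const t c).fun_div ((hf.fun_pow p).fun_mul (hg.fun_pow q))
    (mul_ne_zero (pow_ne_zero p hf0) (pow_ne_zero q hg0))).congr_deriv ?_
  rw [natCast_mul_pow_sub_one hf0, natCast_mul_pow_sub_one hg0]
  field_simp
  ring

end

theorem natCast_add_one_add_mul_choose {R : Type*} [Semiring R] (n i : ℕ) :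
    ((n + 1 + i : ℕ) : R) * (n + i).choose i = (n + (i + 1)).choose (i + 1) * (i + 1 : ℕ) := by
  rw [show n + 1 + i = n + i + 1 by ring, ← add_assoc, ← Nat.cast_mul, ← Nat.cast_mul,
    Nat.add_one_mul_choose_eq]

theorem Finset.Nat.sum_antidiagonal_succ_eq_of_shift {M : Type*} [AddCommMonoid M]
    (T F G : ℕ × ℕ → M) (n : ℕ) (h_left : T (0, n + 1) = G (0, n))
    (h_right : T (n + 1, 0) = F (n, 0))
    (h_mid : ∀ i u, i + u + 1 = n → T (i + 1, u + 1) = F (i, u + 1) + G (i + 1, u)) :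
    ∑ p ∈ antidiagonal (n + 1), T p = ∑ p ∈ antidiagonal n, (F p + G p) := by
  rcases n with _ | n
  · rw [Nat.sum_antidiagonal_succ, Nat.antidiagonal_zero, sum_singleton, sum_singleton, h_left,
      h_right, add_comm]
  · rw [Nat.sum_antidiagonal_succ, Nat.sum_antidiagonal_succ', sum_add_distrib,
      Nat.sum_antidiagonal_succ' (f := F), Nat.sum_antidiagonal_succ (f := G), h_left, h_right,
      sum_congr rfl fun p hp => h_mid p.1 p.2 (by rw [mem_antidiagonal.mp hp]), sum_add_distrib]
    abel

namespace TriplePole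

-- The first sum of the statement divided by `2m + 1 - r`, indexed by `p = (s - 1, k + 1 - s)`,
-- with `j = m + 1 - r`.
noncomputable def partialFracSum (x y z : ℂ) (k l j : ℕ) : ℂ :=
  ∑ p ∈ antidiagonal k, ((l - 1 + p.2).choose p.2 : ℂ) * ((j + p.1).choose j : ℂ) *
    (-1) ^ (l + p.1 + 1) * (k + p.2 : ℂ) / ((z - y) ^ (l + p.2) * (y - x) ^ (p.1 + j + 1))

-- The right side of the statement divided by `2m + 1 - r`, with `j = m + 1 - r`. The term `s` of
-- its first sum and the term `s'` of its second sum share a denominator when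
-- `(m + 1 - s, s + 1 - r) = (s' + 1 - r, m + 1 - s') = p`, and then
-- `(2m + 1 - s)(2s + 1 - r) - (2m + 1 - s')(2s' + 1 - r) = (2m + 1 - r)(p.2 - p.1)`.
noncomputable def crossSum (x y z : ℂ) (k l j : ℕ) : ℂ :=
  (-1) ^ (k + l) * ∑ p ∈ antidiagonal (j + 1), ((k - 1 + p.1).choose p.1 : ℂ) *
    ((l - 1 + p.2).choose p.2 : ℂ) * (p.2 - p.1 : ℂ) / ((y - x) ^ (k + p.1) * (z - x) ^ (l + p.2))

theorem sum_Icc_eq_partialFracSum (x y z : ℂ) (k : ℕ) {l : ℕ} (hl : 1 ≤ l) {m r : ℕ}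
    (hr : r ≤ m + 1) :
    ∑ s ∈ Icc 1 (k + 1),
      ((k + l - s).choose (k + 1 - s) : ℂ) * ((m + s - r).choose (m + 1 - r) : ℂ) *
        (-1 : ℂ) ^ (l + s) * ((2 * k + 1 - s : ℕ) : ℂ) * ((2 * m + 1 - r : ℕ) : ℂ) /
        ((z - y) ^ (l + k + 1 - s) * (y - x) ^ (m + s + 1 - r))
      = ((2 * m + 1 - r : ℕ) : ℂ) * partialFracSum x y z k l (m + 1 - r) := by
  obtain ⟨L, rfl⟩ : ∃ L, l = L + 1 := ⟨l - 1, by omega⟩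
  obtain ⟨j, hj⟩ : ∃ j, m + 1 = r + j := ⟨m + 1 - r, by omega⟩
  rw [← Ico_add_one_right_eq_Icc, sum_Ico_eq_sum_range, partialFracSum,
    Nat.sum_antidiagonal_eq_sum_range_succ_mk, mul_sum, Nat.add_sub_cancel]
  refine sum_congr rfl fun t ht => ?_
  obtain ⟨v, rfl⟩ : ∃ v, k = t + v := ⟨k - t, by have := mem_range.mp ht; omega⟩
  simp only [Nat.add_sub_cancel, Nat.add_sub_cancel_left]
  rw [show t + v + (L + 1) - (1 + t) = L + v by omega, show t + v + 1 - (1 + t) = v by omega,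
    show m + (1 + t) - r = j + t by omega, show m + 1 - r = j by omega,
    show 2 * (t + v) + 1 - (1 + t) = t + 2 * v by omega,
    show L + 1 + (t + v) + 1 - (1 + t) = L + 1 + v by omega,
    show m + (1 + t) + 1 - r = t + j + 1 by omega]
  push_cast
  ring

theorem sum_Icc_sub_sum_Icc_eq_crossSum (x y z : ℂ) {k l : ℕ} (hk : 1 ≤ k) (hl : 1 ≤ l) {m r : ℕ}
    (hr1 : 1 ≤ r) (hr2 : r ≤ m + 1) :
    (∑ s ∈ Icc (r - 1) (m + 1),
        ((m + k - s).choose (m + 1 - s) : ℂ) * ((s + l - r).choose (s + 1 - r) : ℂ) *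
          (-1 : ℂ) ^ (k + l) * ((2 * m + 1 - s : ℕ) : ℂ) * ((2 * s + 1 - r : ℕ) : ℂ) /
          ((y - x) ^ (k + m + 1 - s) * (z - x) ^ (l + s + 1 - r)))
    - (∑ s ∈ Icc (r - 1) (m + 1),
        ((m + l - s).choose (m + 1 - s) : ℂ) * ((s + k - r).choose (s + 1 - r) : ℂ) *
          (-1 : ℂ) ^ (k + l) * ((2 * m + 1 - s : ℕ) : ℂ) * ((2 * s + 1 - r : ℕ) : ℂ) /
          ((z - x) ^ (l + m + 1 - s) * (y - x) ^ (k + s + 1 - r)))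
      = ((2 * m + 1 - r : ℕ) : ℂ) * crossSum x y z k l (m + 1 - r) := by
  obtain ⟨K, rfl⟩ : ∃ K, k = K + 1 := ⟨k - 1, by omega⟩
  obtain ⟨L, rfl⟩ : ∃ L, l = L + 1 := ⟨l - 1, by omega⟩
  obtain ⟨R, rfl⟩ : ∃ R, r = R + 1 := ⟨r - 1, by omega⟩
  obtain ⟨j, rfl⟩ : ∃ j, m = R + j := ⟨m - R, by omega⟩
  simp only [Nat.add_sub_cancel]
  rw [← Ico_add_one_right_eq_Icc, sum_Ico_eq_sum_range, sum_Ico_eq_sum_range,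
    show R + j + 1 + 1 - R = j + 2 by omega, show R + j + 1 - (R + 1) = j by omega,
    show 2 * (R + j) + 1 - (R + 1) = R + 2 * j by omega, ← sum_range_reflect _ (j + 2),
    ← sum_sub_distrib, crossSum, Nat.sum_antidiagonal_eq_sum_range_succ_mk, mul_sum, mul_sum]
  refine sum_congr rfl fun t ht => ?_
  obtain ⟨u, hu⟩ : ∃ u, j + 1 - t = u := ⟨_, rfl⟩
  have hju : j + 1 = t + u := by have := mem_range.mp ht; omega
  simp only [Nat.add_sub_cancel]
  rw [show j + 2 - 1 - t = u by omega, hu,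
    show R + j + (K + 1) - (R + u) = K + t by omega, show R + j + 1 - (R + u) = t by omega,
    show R + u + (L + 1) - (R + 1) = L + u by omega, show R + u + 1 - (R + 1) = u by omega,
    show 2 * (R + j) + 1 - (R + u) = R + j + t by omega,
    show 2 * (R + u) + 1 - (R + 1) = R + 2 * u by omega,
    show K + 1 + (R + j) + 1 - (R + u) = K + 1 + t by omega,
    show L + 1 + (R + u) + 1 - (R + 1) = L + 1 + u by omega,
    show R + j + (L + 1) - (R + t) = L + u by omega, show R + j + 1 - (R + t) = u by omega,
    show R + t + (K + 1) - (R + 1) = K + t by omega, show R + t + 1 - (R + 1) = t by omega,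
    show 2 * (R + j) + 1 - (R + t) = R + j + u by omega,
    show 2 * (R + t) + 1 - (R + 1) = R + 2 * t by omega,
    show L + 1 + (R + j) + 1 - (R + t) = L + 1 + u by omega,
    show K + 1 + (R + t) + 1 - (R + 1) = K + 1 + t by omega]
  push_cast
  ring

variable {x y z : ℂ}

theorem hasDerivAt_partialFracSum_fst (hyx : y ≠ x) (hzy : z ≠ y) (k l j : ℕ) :
    HasDerivAt (fun x => partialFracSum x y z k l j)
      ((j + 1) * partialFracSum x y z k l (j + 1)) x := by
  unfold partialFracSum
  refine (HasDerivAt.fun_sum fun p _ => (hasDerivAt_const x (z - y)).const_div_pow_mul_pow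
    ((hasDerivAt_id' x).const_sub y) (sub_ne_zero.2 hzy) (sub_ne_zero.2 hyx) _ _ _).congr_deriv ?_
  rw [mul_sum]
  refine sum_congr rfl fun p _ => ?_
  have h : ((j + p.1 + 1 : ℕ) : ℂ) * (j + p.1).choose j
      = (j + p.1 + 1).choose (j + 1) * (j + 1 : ℕ) := by
    exact_mod_cast Nat.add_one_mul_choose_eq (j + p.1) j
  rw [show j + 1 + p.1 = j + p.1 + 1 by ring, show p.1 + (j + 1) + 1 = p.1 + j + 1 + 1 by ring]
  push_cast at h ⊢
  linear_combination (-1) ^ (l + p.1 + 1) * ((l - 1 + p.2).choose p.2 : ℂ) * (k + p.2 : ℂ) /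
    ((z - y) ^ (l + p.2) * (y - x) ^ (p.1 + j + 1 + 1)) * h

theorem hasDerivAt_crossSum_fst (hyx : y ≠ x) (hzx : z ≠ x) {k l : ℕ} (hk : 1 ≤ k) (hl : 1 ≤ l)
    (j : ℕ) :
    HasDerivAt (fun x => crossSum x y z k l j) ((j + 1) * crossSum x y z k l (j + 1)) x := by
  unfold crossSum
  refine ((HasDerivAt.fun_sum fun p _ => ((hasDerivAt_id' x).const_sub y).const_div_pow_mul_pow
    ((hasDerivAt_id' x).const_sub z) (sub_ne_zero.2 hyx) (sub_ne_zero.2 hzx) _ _ _).const_mul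
    ((-1 : ℂ) ^ (k + l))).congr_deriv ?_
  obtain ⟨K, rfl⟩ : ∃ K, k = K + 1 := ⟨k - 1, by omega⟩
  obtain ⟨L, rfl⟩ : ∃ L, l = L + 1 := ⟨l - 1, by omega⟩
  simp only [Nat.add_sub_cancel]
  rw [mul_left_comm]
  congr 1
  rw [mul_sum]
  symm
  set c : ℕ × ℕ → ℂ := fun p => ((K + p.1).choose p.1 : ℂ) * ((L + p.2).choose p.2 : ℂ) *
    (p.2 - p.1 : ℂ)
  have hK := natCast_add_one_add_mul_choose (R := ℂ) K
  have hL := natCast_add_one_add_mul_choose (R := ℂ) L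
  -- Differentiating sends the term at `p` to the terms at `p + (1, 0)` and `p + (0, 1)`.
  refine (Nat.sum_antidiagonal_succ_eq_of_shift _
    (fun p => c p * (K + 1 + p.1 : ℕ) / ((y - x) ^ (K + 1 + p.1 + 1) * (z - x) ^ (L + 1 + p.2)))
    (fun p => c p * (L + 1 + p.2 : ℕ) / ((y - x) ^ (K + 1 + p.1) * (z - x) ^ (L + 1 + p.2 + 1)))
    (j + 1) ?_ ?_ ?_).trans (sum_congr rfl fun p _ => ?_)
  · have h := hL (j + 1)
    simp only [c]
    push_cast at h ⊢
    simp only [Nat.choose_zero_right, Nat.cast_one, add_zero, sub_zero, one_mul]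
    linear_combination (-(j + 1) / ((y - x) ^ (K + 1) * (z - x) ^ (L + 1 + (j + 1 + 1))) : ℂ) * h
  · have h := hK (j + 1)
    simp only [c]
    push_cast at h ⊢
    simp only [Nat.choose_zero_right, Nat.cast_one, add_zero, zero_sub, mul_one]
    linear_combination ((j + 1) / ((y - x) ^ (K + 1 + (j + 1 + 1)) * (z - x) ^ (L + 1)) : ℂ) * h
  · intro i u hiu
    have h1 := hK i
    have h2 := hL u
    have hj : (j : ℂ) = i + u := by exact_mod_cast (by omega : j = i + u)
    simp only [c]
    push_cast at h1 h2 ⊢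
    set A := ((K + (i + 1)).choose (i + 1) : ℂ)
    set B := ((L + (u + 1)).choose (u + 1) : ℂ)
    set D := (y - x) ^ (K + 1 + (i + 1)) * (z - x) ^ (L + 1 + (u + 1))
    linear_combination (-B * (u + 1 - i) / D) * h1 + (-A * (u - i - 1) / D) * h2 +
      (A * B * (u - i) / D) * hj
  · simp only [c]; ring

theorem hasDerivAt_partialFracSum_snd (hyx : y ≠ x) (hzy : z ≠ y) (k : ℕ) {l : ℕ} (hl : 1 ≤ l) :
    HasDerivAt (fun y => partialFracSum x y z k l 0) (k * partialFracSum x y z (k + 1) l 0) y := by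
  unfold partialFracSum
  refine (HasDerivAt.fun_sum fun p _ => ((hasDerivAt_id' y).const_sub z).const_div_pow_mul_pow
    ((hasDerivAt_id' y).sub_const x) (sub_ne_zero.2 hzy) (sub_ne_zero.2 hyx) _ _ _).congr_deriv ?_
  obtain ⟨L, rfl⟩ : ∃ L, l = L + 1 := ⟨l - 1, by omega⟩
  simp only [Nat.add_sub_cancel, zero_add, add_zero, Nat.choose_zero_right, Nat.cast_one, mul_one]
  rw [mul_sum]
  symm
  set c : ℕ × ℕ → ℂ := fun p =>
    ((L + p.2).choose p.2 : ℂ) * (-1) ^ (L + 1 + p.1 + 1) * (k + p.2 : ℂ)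
  have hL := natCast_add_one_add_mul_choose (R := ℂ) L
  refine (Nat.sum_antidiagonal_succ_eq_of_shift _
    (fun p => -(c p * (p.1 + 1 : ℕ) / ((z - y) ^ (L + 1 + p.2) * (y - x) ^ (p.1 + 1 + 1))))
    (fun p => c p * (L + 1 + p.2 : ℕ) / ((z - y) ^ (L + 1 + p.2 + 1) * (y - x) ^ (p.1 + 1)))
    k ?_ ?_ ?_).trans (sum_congr rfl fun p _ => ?_)
  · have h := hL k
    simp only [c]
    push_cast at h ⊢
    linear_combination (-(-1) ^ (L + 1 + 0 + 1) * 2 * k /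
      ((z - y) ^ (L + 1 + k + 1) * (y - x) ^ 1) : ℂ) * h
  · simp only [c]
    push_cast
    ring
  · intro t v htv
    have h2 := hL v
    have hk : (k : ℂ) = t + v + 1 := by exact_mod_cast htv.symm
    simp only [c]
    push_cast at h2 ⊢
    set s : ℂ := (-1) ^ (L + 1 + t + 1)
    set B := ((L + (v + 1)).choose (v + 1) : ℂ)
    set D := (z - y) ^ (L + 1 + (v + 1)) * (y - x) ^ (t + 1 + 1)
    linear_combination (s * (k + v) / D) * h2 + (-s * B * (k + v + 1) / D) * hk
  · simp only [c]; ring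

theorem hasDerivAt_partialFracSum_thd (hzx : z ≠ x) (hyz : y ≠ z) {k : ℕ} (hk : 1 ≤ k) (l : ℕ) :
    HasDerivAt (fun y => partialFracSum x z y l k 0) (k * partialFracSum x z y l (k + 1) 0) y := by
  unfold partialFracSum
  refine (HasDerivAt.fun_sum fun p _ => ((hasDerivAt_id' y).sub_const z).const_div_pow_mul_pow
    (hasDerivAt_const y (z - x)) (sub_ne_zero.2 hyz) (sub_ne_zero.2 hzx) _ _ _).congr_deriv ?_
  obtain ⟨K, rfl⟩ : ∃ K, k = K + 1 := ⟨k - 1, by omega⟩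
  simp only [Nat.add_sub_cancel, zero_add, add_zero, Nat.choose_zero_right, Nat.cast_one, mul_one]
  rw [mul_sum]
  refine sum_congr rfl fun p _ => ?_
  have h : ((K + p.2).choose p.2 : ℂ) * (K + 1 + p.2) = (K + 1 + p.2).choose p.2 * (K + 1) := by
    have := Nat.choose_mul_succ_eq (K + p.2) p.2
    rw [show K + p.2 + 1 - p.2 = K + 1 by omega, add_right_comm] at this
    exact_mod_cast this
  push_cast
  linear_combination (-(-1) ^ (K + 1 + p.1 + 1) * (l + p.2) /
    ((y - z) ^ (K + 1 + p.2 + 1) * (z - x) ^ (p.1 + 1)) : ℂ) * h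

theorem crossSum_zero {k l : ℕ} (hk : 1 ≤ k) (hl : 1 ≤ l) :
    crossSum x y z k l 0 = (-1) ^ (k + l) * l / ((y - x) ^ k * (z - x) ^ (l + 1))
      - (-1) ^ (k + l) * k / ((y - x) ^ (k + 1) * (z - x) ^ l) := by
  obtain ⟨K, rfl⟩ : ∃ K, k = K + 1 := ⟨k - 1, by omega⟩
  obtain ⟨L, rfl⟩ : ∃ L, l = L + 1 := ⟨l - 1, by omega⟩
  simp only [crossSum, zero_add, Nat.sum_antidiagonal_succ, Nat.antidiagonal_zero, sum_singleton,
    Nat.add_sub_cancel, add_zero, Nat.choose_zero_right, Nat.choose_one_right]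
  push_cast
  ring

theorem hasDerivAt_crossSum_snd (hyx : y ≠ x) (hzx : z ≠ x) {k l : ℕ} (hk : 1 ≤ k) (hl : 1 ≤ l) :
    HasDerivAt (fun y => crossSum x y z k l 0) (k * crossSum x y z (k + 1) l 0) y := by
  have hd (c : ℂ) (p q : ℕ) := ((hasDerivAt_id' y).sub_const x).const_div_pow_mul_pow
    (hasDerivAt_const y (z - x)) (sub_ne_zero.2 hyx) (sub_ne_zero.2 hzx) c p q
  simp only [crossSum_zero hk hl, crossSum_zero (Nat.le_succ_of_le hk) hl]
  refine ((hd _ k (l + 1)).sub (hd _ (k + 1) l)).congr_deriv ?_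
  have : y - x ≠ 0 := sub_ne_zero.2 hyx
  rw [show k + 1 + l = k + l + 1 by ring, pow_succ]
  field_simp
  ring

theorem partialFracSum_sub_eq_crossSum_zero_swap {k l : ℕ} (hk : 1 ≤ k) (hl : 1 ≤ l)
    (h : partialFracSum x y z k l 0 - partialFracSum x z y l k 0 = crossSum x y z k l 0) :
    partialFracSum x z y l k 0 - partialFracSum x y z k l 0 = crossSum x z y l k 0 := by
  rw [crossSum_zero hl hk]
  rw [crossSum_zero hk hl] at h
  linear_combination -h

theorem partialFracSum_sub_eq_crossSum_one_one (hxy : x ≠ y) (hyz : y ≠ z) (hxz : x ≠ z) :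
    partialFracSum x y z 1 1 0 - partialFracSum x z y 1 1 0 = crossSum x y z 1 1 0 := by
  have : y - x ≠ 0 := sub_ne_zero.2 hxy.symm
  have : z - x ≠ 0 := sub_ne_zero.2 hxz.symm
  have : z - y ≠ 0 := sub_ne_zero.2 hyz.symm
  have : y - z ≠ 0 := sub_ne_zero.2 hyz
  rw [crossSum_zero le_rfl le_rfl]
  simp only [partialFracSum, zero_add, Nat.sum_antidiagonal_succ, Nat.antidiagonal_zero,
    sum_singleton, Nat.sub_self, add_zero, Nat.choose_zero_right, Nat.choose_self]
  push_cast
  field_simp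
  ring

theorem partialFracSum_sub_eq_crossSum_zero_succ (hzx : z ≠ x) {k l : ℕ} (hk : 1 ≤ k)
    (hl : 1 ≤ l) (h : ∀ y, y ≠ x → y ≠ z →
      partialFracSum x y z k l 0 - partialFracSum x z y l k 0 = crossSum x y z k l 0)
    (hyx : y ≠ x) (hyz : y ≠ z) :
    partialFracSum x y z (k + 1) l 0 - partialFracSum x z y l (k + 1) 0
      = crossSum x y z (k + 1) l 0 := by
  have hP := (hasDerivAt_partialFracSum_snd hyx hyz.symm k hl).sub
    (hasDerivAt_partialFracSum_thd hzx hyz hk l)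
  have hQ := hasDerivAt_crossSum_snd hyx hzx hk hl
  have heq : (fun y => partialFracSum x y z k l 0 - partialFracSum x z y l k 0)
      =ᶠ[nhds y] fun y => crossSum x y z k l 0 := by
    filter_upwards [eventually_ne_nhds hyx, eventually_ne_nhds hyz] with w h1 h2 using h w h1 h2
  have hk0 : (k : ℂ) ≠ 0 := by exact_mod_cast (by omega : k ≠ 0)
  apply mul_left_cancel₀ hk0
  linear_combination hP.unique (hQ.congr_of_eventuallyEq heq)

theorem partialFracSum_sub_eq_crossSum_zero {k l : ℕ} (hk : 1 ≤ k) (hl : 1 ≤ l)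
    (hxy : x ≠ y) (hyz : y ≠ z) (hxz : x ≠ z) :
    partialFracSum x y z k l 0 - partialFracSum x z y l k 0 = crossSum x y z k l 0 := by
  have left_one (k : ℕ) (hk : 1 ≤ k) : ∀ x y z : ℂ, x ≠ y → y ≠ z → x ≠ z →
      partialFracSum x y z k 1 0 - partialFracSum x z y 1 k 0 = crossSum x y z k 1 0 := by
    induction k, hk using Nat.le_induction with
    | base => exact fun x y z => partialFracSum_sub_eq_crossSum_one_one
    | succ k hk ih =>
      exact fun x y z hxy hyz hxz => partialFracSum_sub_eq_crossSum_zero_succ hxz.symm hk le_rfl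
        (fun y h1 h2 => ih x y z h1.symm h2 hxz) hxy.symm hyz
  induction k, hk using Nat.le_induction generalizing y with
  | base =>
    exact partialFracSum_sub_eq_crossSum_zero_swap hl le_rfl (left_one l hl x z y hxz hyz.symm hxy)
  | succ k hk ih =>
    exact partialFracSum_sub_eq_crossSum_zero_succ hxz.symm hk hl (fun y h1 h2 => ih h1.symm h2)
      hxy.symm hyz

theorem partialFracSum_sub_eq_crossSum {k l : ℕ} (hk : 1 ≤ k) (hl : 1 ≤ l) (hyz : y ≠ z)
    (j : ℕ) (hxy : x ≠ y) (hxz : x ≠ z) :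
    partialFracSum x y z k l j - partialFracSum x z y l k j = crossSum x y z k l j := by
  induction j generalizing x with
  | zero => exact partialFracSum_sub_eq_crossSum_zero hk hl hxy hyz hxz
  | succ j ih =>
    have hP := (hasDerivAt_partialFracSum_fst hxy.symm hyz.symm k l j).sub
      (hasDerivAt_partialFracSum_fst hxz.symm hyz l k j)
    have hQ := hasDerivAt_crossSum_fst hxy.symm hxz.symm hk hl j
    have heq : (fun x => partialFracSum x y z k l j - partialFracSum x z y l k j)
        =ᶠ[nhds x] fun x => crossSum x y z k l j := by
      filter_upwards [eventually_ne_nhds hxy, eventually_ne_nhds hxz] with w h1 h2 using ih h1 h2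
    apply mul_left_cancel₀ (Nat.cast_add_one_ne_zero j)
    linear_combination hP.unique (hQ.congr_of_eventuallyEq heq)

end TriplePole

theorem statement4_general (x y z : ℂ) (hxy : x ≠ y) (hyz : y ≠ z) (hxz : x ≠ z)
    (m k l : ℕ) (hk : 1 ≤ k) (hl : 1 ≤ l)
    (r : ℕ) (hr1 : 1 ≤ r) (hr2 : r ≤ m + 1) :
    (∑ s ∈ Finset.Icc 1 (k + 1),
        ((k + l - s).choose (k + 1 - s) : ℂ) * ((m + s - r).choose (m + 1 - r) : ℂ) *
          (-1 : ℂ) ^ (l + s) * ((2 * k + 1 - s : ℕ) : ℂ) * ((2 * m + 1 - r : ℕ) : ℂ) /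
          ((z - y) ^ (l + k + 1 - s) * (y - x) ^ (m + s + 1 - r)))
    - (∑ s ∈ Finset.Icc 1 (l + 1),
        ((l + k - s).choose (l + 1 - s) : ℂ) * ((m + s - r).choose (m + 1 - r) : ℂ) *
          (-1 : ℂ) ^ (k + s) * ((2 * l + 1 - s : ℕ) : ℂ) * ((2 * m + 1 - r : ℕ) : ℂ) /
          ((y - z) ^ (l + k + 1 - s) * (z - x) ^ (m + s + 1 - r)))
    = (∑ s ∈ Finset.Icc (r - 1) (m + 1),
        ((m + k - s).choose (m + 1 - s) : ℂ) * ((s + l - r).choose (s + 1 - r) : ℂ) *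
          (-1 : ℂ) ^ (k + l) * ((2 * m + 1 - s : ℕ) : ℂ) * ((2 * s + 1 - r : ℕ) : ℂ) /
          ((y - x) ^ (k + m + 1 - s) * (z - x) ^ (l + s + 1 - r)))
    - (∑ s ∈ Finset.Icc (r - 1) (m + 1),
        ((m + l - s).choose (m + 1 - s) : ℂ) * ((s + k - r).choose (s + 1 - r) : ℂ) *
          (-1 : ℂ) ^ (k + l) * ((2 * m + 1 - s : ℕ) : ℂ) * ((2 * s + 1 - r : ℕ) : ℂ) /
          ((z - x) ^ (l + m + 1 - s) * (y - x) ^ (k + s + 1 - r))) := by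
  have hz := TriplePole.sum_Icc_eq_partialFracSum x z y l hk hr2
  rw [Nat.add_comm k l] at hz
  rw [TriplePole.sum_Icc_eq_partialFracSum x y z k hl hr2, hz,
    TriplePole.sum_Icc_sub_sum_Icc_eq_crossSum x y z hk hl hr1 hr2, ← mul_sub,
    TriplePole.partialFracSum_sub_eq_crossSum hk hl hyz (m + 1 - r) hxy hxz]

/-- STATEMENT 4: the combinatorial identity of Corollary 2.1, for pairwise distinct
`x, y, z ∈ ℂ`, positive integers `m, k, l` and `1 ≤ r ≤ m + 1`. -/
theorem statement4 (x y z : ℂ) (hxy : x ≠ y) (hyz : y ≠ z) (hxz : x ≠ z)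
    (m k l : ℕ) (hm : 1 ≤ m) (hk : 1 ≤ k) (hl : 1 ≤ l)
    (r : ℕ) (hr1 : 1 ≤ r) (hr2 : r ≤ m + 1) :
    (∑ s ∈ Finset.Icc 1 (k + 1),
        ((k + l - s).choose (k + 1 - s) : ℂ) * ((m + s - r).choose (m + 1 - r) : ℂ) *
          (-1 : ℂ) ^ (l + s) * ((2 * k + 1 - s : ℕ) : ℂ) * ((2 * m + 1 - r : ℕ) : ℂ) /
          ((z - y) ^ (l + k + 1 - s) * (y - x) ^ (m + s + 1 - r)))
    - (∑ s ∈ Finset.Icc 1 (l + 1),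
        ((l + k - s).choose (l + 1 - s) : ℂ) * ((m + s - r).choose (m + 1 - r) : ℂ) *
          (-1 : ℂ) ^ (k + s) * ((2 * l + 1 - s : ℕ) : ℂ) * ((2 * m + 1 - r : ℕ) : ℂ) /
          ((y - z) ^ (l + k + 1 - s) * (z - x) ^ (m + s + 1 - r)))
    = (∑ s ∈ Finset.Icc (r - 1) (m + 1),
        ((m + k - s).choose (m + 1 - s) : ℂ) * ((s + l - r).choose (s + 1 - r) : ℂ) *
          (-1 : ℂ) ^ (k + l) * ((2 * m + 1 - s : ℕ) : ℂ) * ((2 * s + 1 - r : ℕ) : ℂ) /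
          ((y - x) ^ (k + m + 1 - s) * (z - x) ^ (l + s + 1 - r)))
    - (∑ s ∈ Finset.Icc (r - 1) (m + 1),
        ((m + l - s).choose (m + 1 - s) : ℂ) * ((s + k - r).choose (s + 1 - r) : ℂ) *
          (-1 : ℂ) ^ (k + l) * ((2 * m + 1 - s : ℕ) : ℂ) * ((2 * s + 1 - r : ℕ) : ℂ) /
          ((z - x) ^ (l + m + 1 - s) * (y - x) ^ (k + s + 1 - r))) :=
  statement4_general x y z hxy hyz hxz m k l hk hl r hr1 hr2
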